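/- Let u = 1^a 2^b with a, b ≥ 2. Then every graph G is u-representable: there exists a labeling G = ([n], E) and a word w over [n] containing all letters of [n] such that for distinct x < y, xy ∈ E if and only if w_{{x,y}} contains no factor of the form x^a y^b. -/

import Mathlib

/-- `red w` replaces each occurrence of the `i`-th smallest letter of `w` by `i`. -/
def red (w : List ℕ) : List ℕ :=
  w.map (fun x => (w.toFinset.filter (· < x)).card + 1)

/-- `w` has a `u`-match (starting at some position `i`): a factor of `w` of length `|u|`
whose reduction equals `red u` (which is `u` itself when `red u = u`). -/
def HasMatch (u w : List ℕ) : Prop :=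
  ∃ i, i + u.length ≤ w.length ∧ red ((w.drop i).take u.length) = red u

/-- The word `w` `u`-represents the labeled graph with vertex set `V` and adjacency `E`:
the letters occurring in `w` are exactly `V`, and two distinct vertices are adjacent
iff `w` restricted to these two letters has no `u`-match. -/
def Represents (u w : List ℕ) (V : Finset ℕ) (E : ℕ → ℕ → Prop) : Prop :=
  (∀ x, x ∈ w ↔ x ∈ V) ∧
  ∀ x ∈ V, ∀ y ∈ V, x ≠ y →
    (E x y ↔ ¬ HasMatch u (w.filter (fun z => z = x ∨ z = y)))

/-!
Let `S = n (n-1) ⋯ 1` and `w = S g₁ S g₂ ⋯ g_m S`, where the gadgets `gᵢ = p^a q^b` run over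
the non-edges `p < q`. For `x < y`, a factor of `w_{x,y}` reduces to `1^a 2^b` iff it equals
`x^a y^b`. For a non-edge the gadget `x^a y^b` survives in `w_{x,y}`. For an edge, `S` restricts
to `yx` and each gadget to a power of a single letter, so `w_{x,y} = yx c₁^{k₁} yx ⋯ c_m^{k_m} yx`.
There every factor `xy` is preceded by `y` or followed by `x`, so `w_{x,y}` avoids `xxyy`, a
factor of `x^a y^b` because `a, b ≥ 2`.
-/

open List

section Lists

variable {α : Type*}

lemma replicate_append_replicate_infix (x y : α) {a a' b b' : ℕ} (ha : a' ≤ a) (hb : b' ≤ b) :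
    replicate a' x ++ replicate b' y <:+: replicate a x ++ replicate b y := by
  refine ⟨replicate (a - a') x, replicate (b - b') y, ?_⟩
  rw [← append_assoc, ← replicate_add, append_assoc, ← replicate_add]
  congr 2 <;> omega

lemma filter_append_flatten_map_append (p : α → Bool) (s : List α) (gs : List (List α)) :
    (s ++ (gs.map (· ++ s)).flatten).filter p =
      s.filter p ++ ((gs.map (filter p)).map (· ++ s.filter p)).flatten := by
  simp [filter_flatten, Function.comp_def]

end Lists

section Reduction

variable {x y : ℕ} {t : List ℕ}

lemma red_of_forall_eq_or_eq (hxy : x < y) (ht : ∀ z ∈ t, z = x ∨ z = y) :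
    red t = t.map (fun z => if z = y ∧ x ∈ t then 2 else 1) := by
  refine map_congr_left fun z hz => ?_
  have hlt : t.toFinset.filter (· < z) = if z = y ∧ x ∈ t then {x} else ∅ := by
    ext v
    have := ht v
    have := ht z hz
    split_ifs <;>
      simp only [Finset.mem_filter, mem_toFinset, Finset.mem_singleton, Finset.notMem_empty] <;>
      grind
  rw [hlt]
  split_ifs <;> simp

lemma red_replicate_append_replicate (hxy : x < y) {a : ℕ} (ha : 1 ≤ a) (b : ℕ) :
    red (replicate a x ++ replicate b y) = replicate a 1 ++ replicate b 2 := by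
  have hx : x ∈ replicate a x ++ replicate b y :=
    mem_append_left _ (mem_replicate.2 ⟨by omega, rfl⟩)
  rw [red_of_forall_eq_or_eq hxy (by simp only [mem_append, mem_replicate]; tauto)]
  simp [hx, hxy.ne]

lemma red_eq_red_replicate_append_replicate_iff (hxy : x < y) {a b : ℕ} (ha : 1 ≤ a) (hb : 1 ≤ b)
    (ht : ∀ z ∈ t, z = x ∨ z = y) :
    red t = red (replicate a 1 ++ replicate b 2) ↔ t = replicate a x ++ replicate b y := by
  rw [red_replicate_append_replicate one_lt_two ha, red_of_forall_eq_or_eq hxy ht]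
  constructor
  · intro h
    have hx : x ∈ t := by
      by_contra hx
      have h2 : 2 ∈ replicate a 1 ++ replicate b 2 :=
        mem_append_right _ (mem_replicate.2 ⟨by omega, rfl⟩)
      simp [← h, hx] at h2
    have hinv : t.map ((fun n => if n = 2 then y else x) ∘
        fun z => if z = y ∧ x ∈ t then 2 else 1) = t := by
      refine (map_congr_left fun z hz => ?_).trans (map_id t)
      rcases ht z hz with rfl | rfl <;> simp [hx, hxy.ne]
    rw [← map_map, h] at hinv
    simpa using hinv.symm
  · rintro rfl
    have hx : x ∈ replicate a x ++ replicate b y :=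
      mem_append_left _ (mem_replicate.2 ⟨by omega, rfl⟩)
    simp [hx, hxy.ne]

lemma hasMatch_iff_exists_infix {u w : List ℕ} :
    HasMatch u w ↔ ∃ t, t <:+: w ∧ t.length = u.length ∧ red t = red u := by
  constructor
  · rintro ⟨i, hi, hred⟩
    exact ⟨_, ((w.drop i).take_prefix _).isInfix.trans (w.drop_suffix i).isInfix,
      by simp only [length_take, length_drop]; omega, hred⟩
  · rintro ⟨t, ⟨s, r, rfl⟩, hlen, hred⟩
    refine ⟨s.length, by simp only [length_append]; omega, ?_⟩
    rwa [append_assoc, drop_left, ← hlen, take_left]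

lemma hasMatch_replicate_append_replicate_iff {w : List ℕ} (hxy : x < y) {a b : ℕ}
    (ha : 1 ≤ a) (hb : 1 ≤ b)
    (hw : ∀ z ∈ w, z = x ∨ z = y) :
    HasMatch (replicate a 1 ++ replicate b 2) w ↔ replicate a x ++ replicate b y <:+: w := by
  rw [hasMatch_iff_exists_infix]
  constructor
  · rintro ⟨t, ht, -, hred⟩
    rw [red_eq_red_replicate_append_replicate_iff hxy ha hb fun z hz => hw z (ht.subset hz)]
      at hred
    exact hred ▸ ht
  · intro h
    exact ⟨_, h, by simp,
      (red_eq_red_replicate_append_replicate_iff hxy ha hb fun z hz => hw z (h.subset hz)).2 rfl⟩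

end Reduction

section Avoidance

variable {α : Type*} {x y c : α}

lemma not_xyy_prefix (hxy : x ≠ y) (hc : c = x ∨ c = y) (k : ℕ) (l : List α) :
    ¬ [x, y, y] <+: replicate k c ++ y :: x :: l := by
  rcases k with _ | _ | k <;> rcases hc with rfl | rfl <;>
    simp [replicate_succ, cons_prefix_cons, hxy, hxy.symm]

lemma not_xxyy_prefix (hxy : x ≠ y) (hc : c = x ∨ c = y) (k : ℕ) (l : List α) :
    ¬ [x, x, y, y] <+: replicate k c ++ y :: x :: l := by
  rcases k with _ | k
  · simp [cons_prefix_cons, hxy]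
  rcases hc with rfl | rfl
  · rw [replicate_succ, cons_append, cons_prefix_cons, not_and]
    exact fun _ => not_xyy_prefix hxy (.inl rfl) k l
  · simp [replicate_succ, cons_prefix_cons, hxy]

lemma not_xxyy_infix_replicate_append (hxy : x ≠ y) (hc : c = x ∨ c = y) {l : List α}
    (hl : ¬ [x, x, y, y] <:+: y :: x :: l) (k : ℕ) :
    ¬ [x, x, y, y] <:+: replicate k c ++ y :: x :: l := by
  induction k with
  | zero => simpa using hl
  | succ k ih =>
    rw [replicate_succ, cons_append, infix_cons_iff, ← cons_append, ← replicate_succ]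
    exact not_or.2 ⟨not_xxyy_prefix hxy hc _ l, ih⟩

lemma not_xxyy_infix_cons_cons (hxy : x ≠ y) (hc : c = x ∨ c = y) {l : List α}
    (hl : ¬ [x, x, y, y] <:+: y :: x :: l) (k : ℕ) :
    ¬ [x, x, y, y] <:+: y :: x :: (replicate k c ++ y :: x :: l) := by
  simp only [infix_cons_iff, cons_prefix_cons, hxy, false_and, true_and, false_or, not_or]
  exact ⟨not_xyy_prefix hxy hc k l, not_xxyy_infix_replicate_append hxy hc hl k⟩

lemma not_xxyy_infix_of_powers (hxy : x ≠ y) (bs : List (List α))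
    (hbs : ∀ blk ∈ bs, ∃ k c, (c = x ∨ c = y) ∧ blk = replicate k c) :
    ¬ [x, x, y, y] <:+: y :: x :: (bs.map (· ++ [y, x])).flatten := by
  induction bs with
  | nil => simp [infix_cons_iff, cons_prefix_cons, hxy]
  | cons b bs ih =>
    obtain ⟨k, c, hc, rfl⟩ := hbs b mem_cons_self
    simpa using not_xxyy_infix_cons_cons hxy hc (ih fun blk h => hbs blk (mem_cons_of_mem _ h)) k

end Avoidance

lemma represents_of_forall_lt {u w : List ℕ} {V : Finset ℕ} {E : ℕ → ℕ → Prop}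
    (hE : ∀ x y, E x y → E y x) (hw : ∀ z, z ∈ w ↔ z ∈ V)
    (h : ∀ x ∈ V, ∀ y ∈ V, x < y → (E x y ↔ ¬ HasMatch u (w.filter (fun z => z = x ∨ z = y)))) :
    Represents u w V E := by
  refine ⟨hw, fun x hx y hy hne => ?_⟩
  rcases hne.lt_or_gt with hlt | hlt
  · exact h x hx y hy hlt
  · have hfilter : w.filter (fun z => z = x ∨ z = y) = w.filter (fun z => z = y ∨ z = x) := by
      simp only [or_comm]
    rw [hfilter, (⟨hE x y, hE y x⟩ : E x y ↔ E y x)]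
    exact h y hy x hx hlt

section Construction

variable {x y n : ℕ}

def descending (n : ℕ) : List ℕ := (range' 1 n).reverse

lemma mem_descending {z : ℕ} : z ∈ descending n ↔ 1 ≤ z ∧ z ≤ n := by
  simp only [descending, mem_reverse, mem_range'_1]
  omega

lemma filter_descending (hx : 1 ≤ x) (hxy : x < y) (hy : y ≤ n) :
    (descending n).filter (fun z => z = x ∨ z = y) = [y, x] := by
  suffices (range' 1 n).filter (fun z => z = x ∨ z = y) = [x, y] by
    rw [descending, filter_reverse, this]
    rfl
  have hperm : ((range' 1 n).filter (fun z => z = x ∨ z = y)).Perm [x, y] :=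
    (perm_ext_iff_of_nodup ((nodup_range' ..).filter _) (by simp [hxy.ne])).2 fun z => by
      simp only [mem_filter, mem_range'_1, decide_eq_true_eq, mem_cons, mem_nil_iff, or_false]
      omega
  exact hperm.eq_of_pairwise (le := (· < ·)) (fun _ _ _ _ h h' => absurd h' h.asymm)
    ((pairwise_lt_range' ..).filter _) (by simp [hxy])

def gadgetWord (a b n : ℕ) (ps : List (ℕ × ℕ)) : List ℕ :=
  descending n ++
    ((ps.map fun p => replicate a p.1 ++ replicate b p.2).map (· ++ descending n)).flatten

lemma mem_gadgetWord {a b : ℕ} {ps : List (ℕ × ℕ)}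
    (hps : ∀ p ∈ ps, (1 ≤ p.1 ∧ p.1 ≤ n) ∧ 1 ≤ p.2 ∧ p.2 ≤ n) (z : ℕ) :
    z ∈ gadgetWord a b n ps ↔ 1 ≤ z ∧ z ≤ n := by
  refine ⟨fun hz => ?_, fun hz => mem_append_left _ (mem_descending.2 hz)⟩
  simp only [gadgetWord, mem_append, mem_descending, mem_flatten, mem_map] at hz
  rcases hz with hz | ⟨_, ⟨_, ⟨p, hp, rfl⟩, rfl⟩, hz⟩
  · exact hz
  rcases mem_append.1 hz with hz | hz
  · rcases mem_append.1 hz with hz | hz <;> rw [eq_of_mem_replicate hz]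
    exacts [(hps p hp).1, (hps p hp).2]
  · exact mem_descending.1 hz

lemma exists_replicate_eq_filter_replicate_append (hxy : x < y) {p q : ℕ} (hpq : p < q)
    (hne : (p, q) ≠ (x, y)) (a b : ℕ) :
    ∃ k c, (c = x ∨ c = y) ∧
      (replicate a p ++ replicate b q).filter (fun z => z = x ∨ z = y) = replicate k c := by
  simp only [filter_append, filter_replicate, decide_eq_true_eq]
  by_cases hp : p = x ∨ p = y
  · have hq : ¬ (q = x ∨ q = y) := by grind
    exact ⟨a, p, hp, by simp [hp, hq]⟩
  by_cases hq : q = x ∨ q = y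
  · exact ⟨b, q, hq, by simp [hp, hq]⟩
  · exact ⟨0, x, .inl rfl, by simp [hp, hq]⟩

lemma replicate_append_replicate_infix_filter_gadgetWord_iff {a b : ℕ} (ha : 2 ≤ a) (hb : 2 ≤ b)
    (hx : 1 ≤ x) (hxy : x < y) (hy : y ≤ n) {ps : List (ℕ × ℕ)} (hps : ∀ p ∈ ps, p.1 < p.2) :
    replicate a x ++ replicate b y <:+: (gadgetWord a b n ps).filter (fun z => z = x ∨ z = y) ↔
      (x, y) ∈ ps := by
  constructor
  · intro h
    by_contra hxy_mem
    rw [gadgetWord, filter_append_flatten_map_append, filter_descending hx hxy hy] at h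
    refine not_xxyy_infix_of_powers hxy.ne _ ?_
      ((replicate_append_replicate_infix x y ha hb).trans h)
    simp only [mem_map]
    rintro _ ⟨_, ⟨⟨p, q⟩, hpq, rfl⟩, rfl⟩
    exact exists_replicate_eq_filter_replicate_append hxy (hps _ hpq)
      (fun h => hxy_mem (h ▸ hpq)) a b
  · intro hmem
    have hgadget : replicate a x ++ replicate b y ++ descending n ∈
        (ps.map fun p => replicate a p.1 ++ replicate b p.2).map (· ++ descending n) :=
      mem_map_of_mem (mem_map_of_mem hmem)
    have hinfix : replicate a x ++ replicate b y <:+: gadgetWord a b n ps :=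
      (prefix_append _ _).isInfix.trans <|
        (infix_of_mem_flatten hgadget).trans (suffix_append _ _).isInfix
    simpa [filter_replicate, hxy.ne] using hinfix.filter (fun z => z = x ∨ z = y)

end Construction

theorem exists_represents_replicate_append_replicate {a b : ℕ} (ha : 2 ≤ a) (hb : 2 ≤ b) (n : ℕ)
    {E : ℕ → ℕ → Prop} (hE : ∀ x y, E x y → E y x) :
    ∃ w, Represents (replicate a 1 ++ replicate b 2) w (Finset.Icc 1 n) E := by
  classical
  let ps := ((Finset.Icc 1 n ×ˢ Finset.Icc 1 n).filter fun p => p.1 < p.2 ∧ ¬ E p.1 p.2).toList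
  have hps (p : ℕ × ℕ) :
      p ∈ ps ↔ ((1 ≤ p.1 ∧ p.1 ≤ n) ∧ 1 ≤ p.2 ∧ p.2 ≤ n) ∧ p.1 < p.2 ∧ ¬ E p.1 p.2 := by
    simp [ps]
  have hletters (z : ℕ) : z ∈ gadgetWord a b n ps ↔ z ∈ Finset.Icc 1 n := by
    rw [mem_gadgetWord (fun p hp => ((hps p).1 hp).1), Finset.mem_Icc]
  refine ⟨gadgetWord a b n ps, represents_of_forall_lt hE hletters fun x hx y hy hxy => ?_⟩
  rw [Finset.mem_Icc] at hx hy
  have htwo : ∀ z ∈ (gadgetWord a b n ps).filter (fun z => z = x ∨ z = y), z = x ∨ z = y :=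
    fun z hz => by simpa using (mem_filter.1 hz).2
  rw [hasMatch_replicate_append_replicate_iff hxy (by omega) (by omega) htwo,
    replicate_append_replicate_infix_filter_gadgetWord_iff ha hb hx.1 hxy hy.2
      fun p hp => ((hps p).1 hp).2.1, hps]
  simp only [hx, hy, hxy, true_and, not_not]

theorem every_graph_1122_representable_general (a b : ℕ) (ha : 2 ≤ a) (hb : 2 ≤ b)
    (V : Type) [Fintype V] (G : SimpleGraph V) :
    ∃ (φ : V ≃ Fin (Fintype.card V)) (w : List ℕ),
      Represents (List.replicate a 1 ++ List.replicate b 2)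
        w (Finset.Icc 1 (Fintype.card V))
        (fun x y => ∃ p q : V, G.Adj p q ∧ x = (φ p : ℕ) + 1 ∧ y = (φ q : ℕ) + 1) := by
  classical
  let φ := Fintype.equivFin V
  obtain ⟨w, hw⟩ := exists_represents_replicate_append_replicate ha hb (Fintype.card V)
    (E := fun x y => ∃ p q : V, G.Adj p q ∧ x = (φ p : ℕ) + 1 ∧ y = (φ q : ℕ) + 1)
    fun _ _ ⟨p, q, hpq, hx, hy⟩ => ⟨q, p, hpq.symm, hy, hx⟩
  exact ⟨φ, w, hw⟩

/-- for `u = 1^a 2^b` with `a, b ≥ 2`, every graph is `u`-representable: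
there exist a labeling of the vertices by `[n]` and a representing word. -/
theorem every_graph_1122_representable (a b : ℕ) (ha : 2 ≤ a) (hb : 2 ≤ b)
    (V : Type) [Fintype V] [DecidableEq V] (G : SimpleGraph V) :
    ∃ (φ : V ≃ Fin (Fintype.card V)) (w : List ℕ),
      Represents (List.replicate a 1 ++ List.replicate b 2)
        w (Finset.Icc 1 (Fintype.card V))
        (fun x y => ∃ p q : V, G.Adj p q ∧ x = (φ p : ℕ) + 1 ∧ y = (φ q : ℕ) + 1) :=
  every_graph_1122_representable_general a b ha hb V G
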